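/- arXiv:2510.26043 — 5 statements merged into one kernel-verified Lean document; each statement's English description precedes it below -/
import Mathlib

section
/- Let g : ℝⁿ → ℝ be convex, let h : ℝⁿ → ℝ be differentiable at x ∈ ℝⁿ with gradient ∇h(x), let γ > 0, and suppose x itself is a global minimizer of the proximal linearized subproblem α ↦ g(α) − ⟨∇h(x), α − x⟩ + (1/(2γ))·‖α − x‖². Then x is a critical point of f = g − h, i.e., ∇h(x) is a subgradient of g at x: g(z) ≥ g(x) + ⟨∇h(x), z − x⟩ for all z ∈ ℝⁿ. -/
open scoped RealInnerProductSpace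

/-- If `g : ℝⁿ → ℝ` is convex, `h` is differentiable at `x` with gradient `∇h(x)`, `γ > 0`,
and `x` itself is a global minimizer of the proximal linearized subproblem
`α ↦ g(α) − ⟪∇h(x), α − x⟫ + (1/(2γ))·‖α − x‖²`, then `x` is a critical point of
`f = g − h`, i.e. `∇h(x)` is a subgradient of `g` at `x`. -/
theorem prox_fixed_point_is_critical (n : ℕ) (g h : EuclideanSpace ℝ (Fin n) → ℝ)
    (hg : ConvexOn ℝ Set.univ g)
    (x gradhx : EuclideanSpace ℝ (Fin n)) (hh : HasGradientAt h gradhx x)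
    (γ : ℝ) (hγ : 0 < γ)
    (hx : ∀ α : EuclideanSpace ℝ (Fin n),
        g x - ⟪gradhx, x - x⟫ + (1 / (2 * γ)) * ‖x - x‖ ^ 2
          ≤ g α - ⟪gradhx, α - x⟫ + (1 / (2 * γ)) * ‖α - x‖ ^ 2) :
    ∀ z : EuclideanSpace ℝ (Fin n), g z ≥ g x + ⟪gradhx, z - x⟫ := by
  intro z
  have key : ∀ t : ℝ, 0 < t → t ≤ 1 →
      g x + ⟪gradhx, z - x⟫ ≤ g z + t * (1 / (2 * γ)) * ‖z - x‖ ^ 2 := by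
    intro t ht ht1
    have hα := hx (x + t • (z - x))
    have hsub : (x + t • (z - x)) - x = t • (z - x) := by abel
    rw [hsub] at hα
    simp only [sub_self, inner_zero_right, norm_zero] at hα
    have hinner : ⟪gradhx, t • (z - x)⟫ = t * ⟪gradhx, z - x⟫ :=
      real_inner_smul_right _ _ _
    have hnorm : ‖t • (z - x)‖ ^ 2 = t ^ 2 * ‖z - x‖ ^ 2 := by
      rw [norm_smul, mul_pow, Real.norm_eq_abs, sq_abs]
    rw [hinner, hnorm] at hα
    have hconv : g (x + t • (z - x)) ≤ (1 - t) * g x + t * g z := by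
      have := hg.2 (Set.mem_univ x) (Set.mem_univ z) (by linarith : (0:ℝ) ≤ 1 - t)
        ht.le (by ring)
      have heq : (1 - t) • x + t • z = x + t • (z - x) := by
        simp [smul_sub, sub_smul]; abel
      rwa [heq] at this
    have : g x + t * ⟪gradhx, z - x⟫ ≤
        (1 - t) * g x + t * g z + (1 / (2 * γ)) * (t ^ 2 * ‖z - x‖ ^ 2) := by
      nlinarith [hα, hconv]
    have ht' : t * (g x + ⟪gradhx, z - x⟫) ≤
        t * (g z + t * (1 / (2 * γ)) * ‖z - x‖ ^ 2) := by nlinarith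
    exact le_of_mul_le_mul_left (by linarith [ht']) ht
  -- take t → 0
  refine le_of_forall_pos_le_add ?_
  intro ε hε
  set C := (1 / (2 * γ)) * ‖z - x‖ ^ 2 with hC
  have hC0 : 0 ≤ C := by positivity
  rcases eq_or_lt_of_le hC0 with hC0' | hC0'
  · have := key 1 one_pos le_rfl
    rw [hC] at hC0'
    nlinarith [this]
  · set t := min 1 (ε / C) with htdef
    have ht0 : 0 < t := lt_min one_pos (div_pos hε hC0')
    have := key t ht0 (min_le_left _ _)
    have htC : t * C ≤ ε := by
      have : t ≤ ε / C := min_le_right _ _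
      calc t * C ≤ (ε / C) * C := by nlinarith
        _ = ε := by field_simp
    rw [hC] at htC
    nlinarith [this, htC]
end

section
/- (Sufficient decrease) Let g : ℝⁿ → ℝ be convex, let h : ℝⁿ → ℝ be convex and differentiable with gradient ∇h, let x ∈ ℝⁿ, γ > 0, and suppose y ∈ ℝⁿ is a global minimizer of the proximal linearized subproblem α ↦ g(α) − ⟨∇h(x), α − x⟩ + (1/(2γ))·‖α − x‖². Then, with f = g − h, one has f(x) ≥ f(y) + (1/(2γ))·‖y − x‖². -/
open scoped RealInnerProductSpace

section FirstOrderConvexity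

variable {E : Type*} [NormedAddCommGroup E] [NormedSpace ℝ E] {s : Set E} {f : E → ℝ}
  {f' : E →L[ℝ] ℝ} {x y : E}

theorem ConvexOn.le_sub_of_hasFDerivAt (hf : ConvexOn ℝ s f) (hx : x ∈ s) (hy : y ∈ s)
    (hf' : HasFDerivAt f f' x) : f' (y - x) ≤ f y - f x := by
  -- Restricted to the segment `[x, y]`, this is the one-variable slope inequality on `[0, 1]`.
  set ℓ : ℝ →ᵃ[ℝ] E := AffineMap.lineMap x y
  have hline : ConvexOn ℝ (ℓ ⁻¹' s) (f ∘ ℓ) := hf.comp_affineMap ℓ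
  have hderiv : HasDerivAt (f ∘ ℓ) (f' (y - x)) 0 := by
    refine HasFDerivAt.comp_hasDerivAt _ ?_ AffineMap.hasDerivAt_lineMap
    simpa [ℓ] using hf'
  simpa [ℓ, slope_def_field] using
    hline.le_slope_of_hasDerivAt (by simpa [ℓ] using hx) (by simpa [ℓ] using hy) one_pos hderiv

end FirstOrderConvexity

theorem ConvexOn.inner_le_sub_of_hasGradientAt {F : Type*} [NormedAddCommGroup F]
    [InnerProductSpace ℝ F] [CompleteSpace F] {s : Set F} {f : F → ℝ} {f' x y : F}
    (hf : ConvexOn ℝ s f) (hx : x ∈ s) (hy : y ∈ s) (hf' : HasGradientAt f f' x) :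
    ⟪f', y - x⟫ ≤ f y - f x :=
  hf.le_sub_of_hasFDerivAt hx hy hf'.hasFDerivAt

theorem prox_sufficient_decrease_general (n : ℕ) (g h : EuclideanSpace ℝ (Fin n) → ℝ)
    (hh : ConvexOn ℝ Set.univ h)
    (gradh : EuclideanSpace ℝ (Fin n) → EuclideanSpace ℝ (Fin n))
    (hgrad : ∀ u : EuclideanSpace ℝ (Fin n), HasGradientAt h (gradh u) u)
    (x y : EuclideanSpace ℝ (Fin n)) (γ : ℝ)
    (hy : ∀ α : EuclideanSpace ℝ (Fin n),
        g y - ⟪gradh x, y - x⟫ + (1 / (2 * γ)) * ‖y - x‖ ^ 2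
          ≤ g α - ⟪gradh x, α - x⟫ + (1 / (2 * γ)) * ‖α - x‖ ^ 2) :
    g x - h x ≥ (g y - h y) + (1 / (2 * γ)) * ‖y - x‖ ^ 2 := by
  have hmin : g y - ⟪gradh x, y - x⟫ + (1 / (2 * γ)) * ‖y - x‖ ^ 2 ≤ g x := by
    simpa using hy x
  have htangent : ⟪gradh x, y - x⟫ ≤ h y - h x :=
    hh.inner_le_sub_of_hasGradientAt (Set.mem_univ x) (Set.mem_univ y) (hgrad x)
  linarith

/-- **Sufficient decrease.** Let `g : ℝⁿ → ℝ` be convex, `h : ℝⁿ → ℝ` convex and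
differentiable with gradient `∇h`, `x ∈ ℝⁿ`, `γ > 0`, and suppose `y` is a global minimizer
of the proximal linearized subproblem `α ↦ g(α) − ⟪∇h(x), α − x⟫ + (1/(2γ))·‖α − x‖²`.
Then, with `f = g − h`, one has `f(x) ≥ f(y) + (1/(2γ))·‖y − x‖²`. -/
theorem prox_sufficient_decrease (n : ℕ) (g h : EuclideanSpace ℝ (Fin n) → ℝ)
    (hg : ConvexOn ℝ Set.univ g) (hh : ConvexOn ℝ Set.univ h)
    (gradh : EuclideanSpace ℝ (Fin n) → EuclideanSpace ℝ (Fin n))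
    (hgrad : ∀ u : EuclideanSpace ℝ (Fin n), HasGradientAt h (gradh u) u)
    (x y : EuclideanSpace ℝ (Fin n)) (γ : ℝ) (hγ : 0 < γ)
    (hy : ∀ α : EuclideanSpace ℝ (Fin n),
        g y - ⟪gradh x, y - x⟫ + (1 / (2 * γ)) * ‖y - x‖ ^ 2
          ≤ g α - ⟪gradh x, α - x⟫ + (1 / (2 * γ)) * ‖α - x‖ ^ 2) :
    g x - h x ≥ (g y - h y) + (1 / (2 * γ)) * ‖y - x‖ ^ 2 :=
  prox_sufficient_decrease_general n g h hh gradh hgrad x y γ hy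
end

section
/- (Strict descent) Let g : ℝⁿ → ℝ be convex, let h : ℝⁿ → ℝ be convex and differentiable with gradient ∇h, let x ∈ ℝⁿ, γ > 0, and suppose y ∈ ℝⁿ is a global minimizer of the proximal linearized subproblem α ↦ g(α) − ⟨∇h(x), α − x⟩ + (1/(2γ))·‖α − x‖². If y ≠ x, then with f = g − h one has f(y) < f(x). -/
open scoped RealInnerProductSpace

/-!
The optimality of `y` tested against `α = x` gives
`g y + (1/(2γ))‖y - x‖² ≤ g x + ⟪∇h(x), y - x⟫`, and convexity of `h` gives
`h x + ⟪∇h(x), y - x⟫ ≤ h y`. Adding the two, `f y + (1/(2γ))‖y - x‖² ≤ f x`,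
and the quadratic term is positive when `y ≠ x`.
-/

theorem ConvexOn.add_fderiv_le {E : Type*} [NormedAddCommGroup E] [NormedSpace ℝ E]
    {s : Set E} {f : E → ℝ} {f' : StrongDual ℝ E} {x y : E} (hf : ConvexOn ℝ s f)
    (hx : x ∈ s) (hy : y ∈ s) (hfx : HasFDerivAt f f' x) :
    f x + f' (y - x) ≤ f y := by
  have hline : HasDerivAt (f ∘ AffineMap.lineMap (k := ℝ) x y) (f' (y - x)) 0 := by
    refine hfx.comp_hasDerivAt_of_eq (0 : ℝ) AffineMap.hasDerivAt_lineMap ?_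
    simp
  have hslope := (hf.comp_affineMap (AffineMap.lineMap x y)).le_slope_of_hasDerivAt
    (by simpa using hx) (by simpa using hy) zero_lt_one hline
  simp only [slope_def_field, Function.comp_apply, AffineMap.lineMap_apply_zero,
    AffineMap.lineMap_apply_one, sub_zero, div_one] at hslope
  linarith

theorem ConvexOn.add_inner_gradient_le {F : Type*} [NormedAddCommGroup F]
    [InnerProductSpace ℝ F] [CompleteSpace F] {s : Set F} {f : F → ℝ} {f' x y : F}
    (hf : ConvexOn ℝ s f) (hx : x ∈ s) (hy : y ∈ s) (hfx : HasGradientAt f f' x) :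
    f x + ⟪f', y - x⟫ ≤ f y :=
  hf.add_fderiv_le hx hy hfx.hasFDerivAt

theorem prox_strict_descent_general (n : ℕ) (g h : EuclideanSpace ℝ (Fin n) → ℝ)
    (hh : ConvexOn ℝ Set.univ h)
    (gradh : EuclideanSpace ℝ (Fin n) → EuclideanSpace ℝ (Fin n))
    (hgrad : ∀ u : EuclideanSpace ℝ (Fin n), HasGradientAt h (gradh u) u)
    (x y : EuclideanSpace ℝ (Fin n)) (γ : ℝ) (hγ : 0 < γ)
    (hy : ∀ α : EuclideanSpace ℝ (Fin n),
        g y - ⟪gradh x, y - x⟫ + (1 / (2 * γ)) * ‖y - x‖ ^ 2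
          ≤ g α - ⟪gradh x, α - x⟫ + (1 / (2 * γ)) * ‖α - x‖ ^ 2)
    (hne : y ≠ x) :
    g y - h y < g x - h x := by
  have hopt := hy x
  simp only [sub_self, inner_zero_right, norm_zero] at hopt
  have htangent := hh.add_inner_gradient_le (Set.mem_univ x) (Set.mem_univ y) (hgrad x)
  have hprox : 0 < (1 / (2 * γ)) * ‖y - x‖ ^ 2 := by
    have : 0 < ‖y - x‖ := norm_pos_iff.mpr (sub_ne_zero.mpr hne)
    positivity
  linarith

/-- **Strict descent.** Let `g : ℝⁿ → ℝ` be convex, `h : ℝⁿ → ℝ` convex and differentiable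
with gradient `∇h`, `x ∈ ℝⁿ`, `γ > 0`, and suppose `y` is a global minimizer of the proximal
linearized subproblem `α ↦ g(α) − ⟪∇h(x), α − x⟫ + (1/(2γ))·‖α − x‖²`. If `y ≠ x`, then
with `f = g − h` one has `f(y) < f(x)`. -/
theorem prox_strict_descent (n : ℕ) (g h : EuclideanSpace ℝ (Fin n) → ℝ)
    (hg : ConvexOn ℝ Set.univ g) (hh : ConvexOn ℝ Set.univ h)
    (gradh : EuclideanSpace ℝ (Fin n) → EuclideanSpace ℝ (Fin n))
    (hgrad : ∀ u : EuclideanSpace ℝ (Fin n), HasGradientAt h (gradh u) u)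
    (x y : EuclideanSpace ℝ (Fin n)) (γ : ℝ) (hγ : 0 < γ)
    (hy : ∀ α : EuclideanSpace ℝ (Fin n),
        g y - ⟪gradh x, y - x⟫ + (1 / (2 * γ)) * ‖y - x‖ ^ 2
          ≤ g α - ⟪gradh x, α - x⟫ + (1 / (2 * γ)) * ‖α - x‖ ^ 2)
    (hne : y ≠ x) :
    g y - h y < g x - h x :=
  prox_strict_descent_general n g h hh gradh hgrad x y γ hγ hy hne
end

section
/- (Theorem 1, subsequential convergence of the proximal linearized algorithm) Let g : ℝⁿ → ℝ be convex and continuous, let h : ℝⁿ → ℝ be convex and differentiable with continuous gradient ∇h, and set f = g − h. Let (γ_k) be a sequence of reals with 0 < γ_min ≤ γ_k ≤ γ_max < ∞ for all k, and let (α_k) be a sequence in ℝⁿ such that for every k, α_{k+1} is a global minimizer of the proximal linearized subproblem α ↦ g(α) − ⟨∇h(α_k), α − α_k⟩ + (1/(2γ_k))·‖α − α_k‖². If (α_k) is bounded and α* is a cluster point of (α_k) (i.e., the limit of some subsequence), then α* is a critical point of f, that is, ∇h(α*) is a subgradient of g at α*: g(z) ≥ g(α*) + ⟨∇h(α*), z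 − α*⟩ for all z ∈ ℝⁿ. -/
/-!
Since `α (k+1)` minimizes a convex function, `∇h(α k) - γ_k⁻¹ (α (k+1) - α k)` is a subgradient
of `g` at `α (k+1)`. Convexity of `h` makes `f = g - h` decrease by at least
`‖α (k+1) - α k‖² / (2 γ_max)` per step, and `f` is bounded below on the bounded orbit, so the
steps tend to zero. Along the subsequence both `α (φ j + 1)` and these subgradients converge, to
`α*` and `∇h(α*)`, and the subgradient inequality passes to the limit.
-/

open scoped RealInnerProductSpace
open Filter Set Topology

variable {E : Type*} [NormedAddCommGroup E] [InnerProductSpace ℝ E]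

def HasSubgradientAt (g : E → ℝ) (v x : E) : Prop :=
  ∀ z, g x + ⟪v, z - x⟫ ≤ g z

noncomputable def proxLinearizedObjective (g : E → ℝ) (w : E) (γ : ℝ) (x : E) : E → ℝ :=
  fun β => g β - ⟪w, β - x⟫ + 1 / (2 * γ) * ‖β - x‖ ^ 2

theorem ConvexOn.hasSubgradientAt_of_hasGradientAt [CompleteSpace E] {h : E → ℝ} {w x : E}
    (hh : ConvexOn ℝ univ h) (hx : HasGradientAt h w x) : HasSubgradientAt h w x := by
  intro y
  let L : ℝ →ᵃ[ℝ] E := AffineMap.lineMap x y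
  have hline : HasDerivAt (h ∘ L) ⟪w, y - x⟫ 0 :=
    hx.hasFDerivAt.comp_hasDerivAt_of_eq 0 AffineMap.hasDerivAt_lineMap (by simp [L])
  have hslope := (hh.comp_affineMap L).le_slope_of_hasDerivAt
    (mem_univ 0) (mem_univ 1) zero_lt_one hline
  simp only [slope_def_field, Function.comp_apply, AffineMap.lineMap_apply_one,
    AffineMap.lineMap_apply_zero, sub_zero, div_one, L] at hslope
  linarith

theorem ConvexOn.hasSubgradientAt_of_isMinOn_proxLinearizedObjective {g : E → ℝ} {w x a : E}
    {γ : ℝ} (hg : ConvexOn ℝ univ g)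
    (ha : IsMinOn (proxLinearizedObjective g w γ x) univ a) :
    HasSubgradientAt g (w - γ⁻¹ • (a - x)) a := by
  intro z
  set C := (2 * γ)⁻¹ * ‖z - a‖ ^ 2
  -- Compare `a` with `a + t • (z - a)`; after division by `t` only an `O(t)` term is left.
  have hsegment : ∀ t ∈ Ioc (0 : ℝ) 1, g a + ⟪w - γ⁻¹ • (a - x), z - a⟫ - t * C ≤ g z := by
    rintro t ⟨ht0, ht1⟩
    have hmin := isMinOn_univ_iff.1 ha (a + t • (z - a))
    have hconv : g (a + t • (z - a)) ≤ (1 - t) * g a + t * g z := by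
      have := hg.2 (mem_univ a) (mem_univ z) (sub_nonneg.2 ht1) ht0.le (sub_add_cancel 1 t)
      rwa [smul_eq_mul, smul_eq_mul, show (1 - t) • a + t • z = a + t • (z - a) by module]
        at this
    have hshift : a + t • (z - a) - x = (a - x) + t • (z - a) := by abel
    simp only [proxLinearizedObjective, hshift, norm_add_sq_real, inner_add_right,
      real_inner_smul_right, norm_smul, Real.norm_eq_abs, mul_pow, sq_abs] at hmin
    rw [← mul_le_mul_iff_right₀ ht0, inner_sub_left, real_inner_smul_left]
    linear_combination hmin + hconv
  have hlim : Tendsto (fun t : ℝ => g a + ⟪w - γ⁻¹ • (a - x), z - a⟫ - t * C) (𝓝[>] 0)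
      (𝓝 (g a + ⟪w - γ⁻¹ • (a - x), z - a⟫)) :=
    tendsto_nhdsWithin_of_tendsto_nhds ((by fun_prop : Continuous fun t : ℝ =>
      g a + ⟪w - γ⁻¹ • (a - x), z - a⟫ - t * C).tendsto' 0 _ (by simp))
  exact le_of_tendsto hlim (eventually_of_mem (Ioc_mem_nhdsGT zero_lt_one) hsegment)

theorem HasSubgradientAt.of_tendsto {ι : Type*} {l : Filter ι} [l.NeBot] {g : E → ℝ}
    {x v : ι → E} {x₀ v₀ : E} (hg : ContinuousAt g x₀) (hx : Tendsto x l (𝓝 x₀))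
    (hv : Tendsto v l (𝓝 v₀)) (hsub : ∀ i, HasSubgradientAt g (v i) (x i)) :
    HasSubgradientAt g v₀ x₀ := fun z =>
  le_of_tendsto' ((hg.tendsto.comp hx).add (hv.inner (tendsto_const_nhds.sub hx))) (hsub · z)

theorem sub_add_sq_le_sub_of_isMinOn_proxLinearizedObjective [CompleteSpace E]
    {g h : E → ℝ} {w x a : E} {γ : ℝ}
    (hh : ConvexOn ℝ univ h) (hgrad : HasGradientAt h w x)
    (ha : IsMinOn (proxLinearizedObjective g w γ x) univ a) :
    g a - h a + 1 / (2 * γ) * ‖a - x‖ ^ 2 ≤ g x - h x := by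
  have hmin := isMinOn_univ_iff.1 ha x
  simp only [proxLinearizedObjective, sub_self, inner_zero_right, norm_zero] at hmin
  have hsubgrad := hh.hasSubgradientAt_of_hasGradientAt hgrad a
  linarith

theorem tendsto_zero_of_add_le_of_bddBelow {F d : ℕ → ℝ} (hF : BddBelow (range F))
    (hd0 : ∀ k, 0 ≤ d k) (hd : ∀ k, F (k + 1) + d k ≤ F k) : Tendsto d atTop (𝓝 0) := by
  have hanti : Antitone F := antitone_nat_of_succ_le fun k => by linarith [hd0 k, hd k]
  have hlim := tendsto_atTop_ciInf hanti hF
  have hdiff : Tendsto (fun k => F k - F (k + 1)) atTop (𝓝 0) := by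
    simpa using hlim.sub (hlim.comp (tendsto_add_atTop_nat 1))
  exact squeeze_zero hd0 (fun k => by linarith [hd k]) hdiff

theorem tendsto_succ_sub_of_isMinOn_proxLinearizedObjective [CompleteSpace E] [ProperSpace E]
    {g h : E → ℝ} {gradh : E → E} {γ : ℕ → ℝ} {γmax : ℝ} {α : ℕ → E}
    (hgcont : Continuous g) (hh : ConvexOn ℝ univ h) (hgrad : ∀ u, HasGradientAt h (gradh u) u)
    (hγ : ∀ k, 0 < γ k ∧ γ k ≤ γmax)
    (hmin : ∀ k, IsMinOn (proxLinearizedObjective g (gradh (α k)) (γ k) (α k)) univ (α (k + 1)))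
    (hbdd : Bornology.IsBounded (range α)) :
    Tendsto (fun k => α (k + 1) - α k) atTop (𝓝 0) := by
  set F : ℕ → ℝ := fun k => g (α k) - h (α k)
  have hhcont : Continuous h := continuous_iff_continuousAt.2 fun u => (hgrad u).continuousAt
  have hFbdd : BddBelow (range F) :=
    (hbdd.isCompact_closure.bddBelow_image (hgcont.sub hhcont).continuousOn).mono
      (range_subset_iff.2 fun k => mem_image_of_mem (g - h) (subset_closure (mem_range_self k)))
  have hγmax : 0 < γmax := (hγ 0).1.trans_le (hγ 0).2
  have hdesc : ∀ k, F (k + 1) + (2 * γmax)⁻¹ * ‖α (k + 1) - α k‖ ^ 2 ≤ F k := fun k => by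
    obtain ⟨hγk, hγk_le⟩ := hγ k
    have hstep := sub_add_sq_le_sub_of_isMinOn_proxLinearizedObjective hh (hgrad (α k)) (hmin k)
    have hcoef : (2 * γmax)⁻¹ ≤ 1 / (2 * γ k) := by
      rw [one_div]
      gcongr
    have hsq := mul_le_mul_of_nonneg_right hcoef (sq_nonneg ‖α (k + 1) - α k‖)
    linarith
  have hsq := (tendsto_zero_of_add_le_of_bddBelow hFbdd (fun k => by positivity) hdesc).const_mul
    (2 * γmax)
  simp only [← mul_assoc, mul_inv_cancel₀ (by positivity : 2 * γmax ≠ 0), one_mul,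
    mul_zero] at hsq
  rw [tendsto_zero_iff_norm_tendsto_zero]
  simpa using hsq.sqrt

/-- **Theorem 1: subsequential convergence of the proximal linearized algorithm.**
Let `g : ℝⁿ → ℝ` be convex and continuous, `h : ℝⁿ → ℝ` convex and differentiable with
continuous gradient `∇h`, and `f = g − h`. Let `0 < γ_min ≤ γ_k ≤ γ_max` and let `(α_k)` be
such that each `α_{k+1}` is a global minimizer of the proximal linearized subproblem
`α ↦ g(α) − ⟪∇h(α_k), α − α_k⟫ + (1/(2γ_k))·‖α − α_k‖²`. If `(α_k)` is bounded and `α*` is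
a cluster point of `(α_k)`, then `α*` is a critical point of `f`, i.e. `∇h(α*)` is a
subgradient of `g` at `α*`. -/
theorem prox_linearized_cluster_point_critical (n : ℕ)
    (g h : EuclideanSpace ℝ (Fin n) → ℝ)
    (hg : ConvexOn ℝ Set.univ g) (hgcont : Continuous g)
    (hh : ConvexOn ℝ Set.univ h)
    (gradh : EuclideanSpace ℝ (Fin n) → EuclideanSpace ℝ (Fin n))
    (hgrad : ∀ u : EuclideanSpace ℝ (Fin n), HasGradientAt h (gradh u) u)
    (hgradcont : Continuous gradh)
    (γ : ℕ → ℝ) (γmin γmax : ℝ) (hγmin : 0 < γmin)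
    (hγ : ∀ k : ℕ, γmin ≤ γ k ∧ γ k ≤ γmax)
    (α : ℕ → EuclideanSpace ℝ (Fin n))
    (hstep : ∀ k : ℕ, ∀ β : EuclideanSpace ℝ (Fin n),
        g (α (k + 1)) - ⟪gradh (α k), α (k + 1) - α k⟫
            + (1 / (2 * γ k)) * ‖α (k + 1) - α k‖ ^ 2
          ≤ g β - ⟪gradh (α k), β - α k⟫ + (1 / (2 * γ k)) * ‖β - α k‖ ^ 2)
    (hbdd : Bornology.IsBounded (Set.range α))
    (αstar : EuclideanSpace ℝ (Fin n)) (φ : ℕ → ℕ) (hφ : StrictMono φ)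
    (hlim : Filter.Tendsto (fun j => α (φ j)) Filter.atTop (nhds αstar)) :
    ∀ z : EuclideanSpace ℝ (Fin n), g z ≥ g αstar + ⟪gradh αstar, z - αstar⟫ := by
  have hmin : ∀ k,
      IsMinOn (proxLinearizedObjective g (gradh (α k)) (γ k) (α k)) univ (α (k + 1)) :=
    fun k => isMinOn_univ_iff.2 (hstep k)
  have hγpos : ∀ k, 0 < γ k := fun k => hγmin.trans_le (hγ k).1
  have hΔ : Tendsto (fun j => α (φ j + 1) - α (φ j)) atTop (𝓝 0) :=
    (tendsto_succ_sub_of_isMinOn_proxLinearizedObjective hgcont hh hgrad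
      (fun k => ⟨hγpos k, (hγ k).2⟩) hmin hbdd).comp hφ.tendsto_atTop
  have hnext : Tendsto (fun j => α (φ j + 1)) atTop (𝓝 αstar) := by
    simpa using hlim.add hΔ
  have hγinv : IsBoundedUnder (· ≤ ·) atTop (norm ∘ fun j => (γ (φ j))⁻¹) :=
    isBoundedUnder_of ⟨γmin⁻¹, fun j => by
      simpa [abs_of_pos (hγpos (φ j))] using inv_anti₀ hγmin (hγ (φ j)).1⟩
  have hsubgrad : Tendsto (fun j => gradh (α (φ j)) - (γ (φ j))⁻¹ • (α (φ j + 1) - α (φ j)))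
      atTop (𝓝 (gradh αstar)) := by
    simpa using ((hgradcont.tendsto αstar).comp hlim).sub (hγinv.smul_tendsto_zero hΔ)
  exact HasSubgradientAt.of_tendsto hgcont.continuousAt hnext hsubgrad fun j =>
    hg.hasSubgradientAt_of_isMinOn_proxLinearizedObjective (hmin (φ j))
end

section
/- (Relative error bound) Let g : ℝⁿ → ℝ be convex, let h : ℝⁿ → ℝ be differentiable with gradient ∇h that is Lipschitz continuous with constant L ≥ 0, let x ∈ ℝⁿ, γ > 0, and suppose y ∈ ℝⁿ is a global minimizer of the proximal linearized subproblem α ↦ g(α) − ⟨∇h(x), α − x⟩ + (1/(2γ))·‖α − x‖². Then there exists z ∈ ℝⁿ such that z is a subgradient of g at y and ‖z − ∇h(y)‖ ≤ (L + 1/γ)·‖y − x‖. -/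
open scoped RealInnerProductSpace

/-- **Relative error bound.** Let `g : ℝⁿ → ℝ` be convex, `h : ℝⁿ → ℝ` differentiable with
gradient `∇h` Lipschitz with constant `L ≥ 0`, `x ∈ ℝⁿ`, `γ > 0`, and suppose `y` is a
global minimizer of the proximal linearized subproblem
`α ↦ g(α) − ⟪∇h(x), α − x⟫ + (1/(2γ))·‖α − x‖²`. Then there exists a subgradient `z` of `g`
at `y` with `‖z − ∇h(y)‖ ≤ (L + 1/γ)·‖y − x‖`. -/
theorem prox_relative_error_bound (n : ℕ) (g h : EuclideanSpace ℝ (Fin n) → ℝ)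
    (hg : ConvexOn ℝ Set.univ g)
    (gradh : EuclideanSpace ℝ (Fin n) → EuclideanSpace ℝ (Fin n))
    (hgrad : ∀ u : EuclideanSpace ℝ (Fin n), HasGradientAt h (gradh u) u)
    (L : ℝ) (hL : 0 ≤ L)
    (hLip : ∀ u v : EuclideanSpace ℝ (Fin n), ‖gradh u - gradh v‖ ≤ L * ‖u - v‖)
    (x y : EuclideanSpace ℝ (Fin n)) (γ : ℝ) (hγ : 0 < γ)
    (hy : ∀ α : EuclideanSpace ℝ (Fin n),
        g y - ⟪gradh x, y - x⟫ + (1 / (2 * γ)) * ‖y - x‖ ^ 2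
          ≤ g α - ⟪gradh x, α - x⟫ + (1 / (2 * γ)) * ‖α - x‖ ^ 2) :
    ∃ z : EuclideanSpace ℝ (Fin n),
      (∀ u : EuclideanSpace ℝ (Fin n), g u ≥ g y + ⟪z, u - y⟫) ∧
      ‖z - gradh y‖ ≤ (L + 1 / γ) * ‖y - x‖ := by
  set v := gradh x with hv
  refine ⟨v - γ⁻¹ • (y - x), ?_, ?_⟩
  · intro u
    set d := u - y with hd
    have e4 : ⟪v - γ⁻¹ • (y - x), d⟫ = ⟪v, d⟫ - γ⁻¹ * ⟪y - x, d⟫ := by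
      rw [inner_sub_left, real_inner_smul_left]
    set A : ℝ := ⟪v - γ⁻¹ • (y - x), d⟫ - (g u - g y) with hA
    set B : ℝ := (1 / (2 * γ)) * ‖d‖ ^ 2 with hB
    have hBnn : 0 ≤ B := by positivity
    have key : ∀ t : ℝ, 0 < t → t ≤ 1 → A ≤ t * B := by
      intro t ht ht1
      have hconv : g (y + t • d) ≤ (1 - t) * g y + t * g u := by
        have h2 := hg.2 (Set.mem_univ y) (Set.mem_univ u) (by linarith : (0:ℝ) ≤ 1 - t)
          ht.le (by ring)
        have heq : (1 - t) • y + t • u = y + t • d := by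
          rw [hd]; module
        rw [heq] at h2
        simpa using h2
      have hmin := hy (y + t • d)
      have e1 : y + t • d - x = (y - x) + t • d := by abel
      rw [e1] at hmin
      have e2 : ‖(y - x) + t • d‖ ^ 2
          = ‖y - x‖ ^ 2 + 2 * (t * ⟪y - x, d⟫) + t ^ 2 * ‖d‖ ^ 2 := by
        rw [norm_add_sq_real, real_inner_smul_right, norm_smul, mul_pow,
          Real.norm_eq_abs, sq_abs]
      rw [e2] at hmin
      have e3 : ⟪v, (y - x) + t • d⟫ = ⟪v, y - x⟫ + t * ⟪v, d⟫ := by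
        rw [inner_add_right, real_inner_smul_right]
      rw [e3] at hmin
      -- derive 0 ≤ t * P
      have hP : 0 ≤ t * ((g u - g y) - ⟪v, d⟫ + 2 * (1 / (2 * γ)) * ⟪y - x, d⟫ + t * B) := by
        rw [hB]
        nlinarith [hmin, hconv]
      have hP' : 0 ≤ (g u - g y) - ⟪v, d⟫ + 2 * (1 / (2 * γ)) * ⟪y - x, d⟫ + t * B :=
        nonneg_of_mul_nonneg_right hP ht
      have hg2 : 2 * (1 / (2 * γ)) = γ⁻¹ := by field_simp
      rw [hg2] at hP'
      rw [hA, e4]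
      linarith
    have hA0 : A ≤ 0 := by
      by_contra hpos
      push_neg at hpos
      have hBA : 0 < B + A := by linarith
      have ht : 0 < A / (B + A) := div_pos hpos hBA
      have ht1 : A / (B + A) ≤ 1 := by
        rw [div_le_one hBA]; linarith
      have hk := key _ ht ht1
      have hlt : A / (B + A) * B < A := by
        rw [div_mul_eq_mul_div, div_lt_iff₀ hBA]
        nlinarith
      linarith
    rw [hA, e4] at hA0
    have : ⟪v - γ⁻¹ • (y - x), d⟫ = ⟪v, d⟫ - γ⁻¹ * ⟪y - x, d⟫ := e4
    rw [ge_iff_le]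
    have := e4 ▸ hA0
    rw [hd] at *
    rw [inner_sub_left, real_inner_smul_left]
    linarith
  · have h1 : v - γ⁻¹ • (y - x) - gradh y = (gradh x - gradh y) - γ⁻¹ • (y - x) := by
      rw [hv]; abel
    rw [h1]
    have h2 : ‖gradh x - gradh y - γ⁻¹ • (y - x)‖
        ≤ ‖gradh x - gradh y‖ + ‖γ⁻¹ • (y - x)‖ := norm_sub_le _ _
    have h3 : ‖γ⁻¹ • (y - x)‖ = γ⁻¹ * ‖y - x‖ := by
      rw [norm_smul, Real.norm_eq_abs, abs_of_pos (inv_pos.mpr hγ)]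
    have h4 : ‖gradh x - gradh y‖ ≤ L * ‖y - x‖ := by
      have := hLip x y
      rwa [norm_sub_rev x y] at this
    rw [one_div]
    have : 0 ≤ ‖y - x‖ := norm_nonneg _
    nlinarith [h2, h3, h4]
end
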